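/- arXiv:2307.00322 — 4 statements merged into one kernel-verified Lean document; each statement's English description precedes it below -/
import Mathlib

section
/- Let T be a tree and Q ⊆ V(T) a fixed subset. Then there exist subtrees S₁ and S₂ of T that divide T (i.e., S₁ ∪ S₂ = T and S₁ and S₂ share exactly one vertex) such that |V(S₁) ∩ Q| ≥ |Q|/3 and |V(S₂) ∩ Q| ≥ |Q|/3. -/
/-!
Let `c` be a median of `Q`, a vertex minimising the total distance to `Q`. Stepping from `c` to
a neighbour `n` brings the points of `Q` in the branch through `n` one step closer and all the
others one step farther, so every branch at `c` holds at most half of `Q`. Grouping the branches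
at `c` greedily into two sides, each side together with `c` holds at least a third of `Q`; the
two sides, each with `c` added, are subtrees meeting only in `c`.
-/

open Finset SimpleGraph

namespace Finset

variable {ι α : Type*} [DecidableEq ι] [AddCommGroup α] [LinearOrder α] [IsOrderedAddMonoid α]

/- Greedy choice: if no single term reaches `a`, adding a term below `a` to a sum below `a`
stays below `a + a ≤ b`. -/
theorem exists_subset_sum_le_and_le_sum_or_eq (f : ι → α) {a b : α} (hab : a + a ≤ b)
    (hb : 0 ≤ b) {s : Finset ι} (hf : ∀ i ∈ s, f i ≤ b) :
    ∃ A ⊆ s, ∑ i ∈ A, f i ≤ b ∧ (a ≤ ∑ i ∈ A, f i ∨ A = s) := by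
  induction s using Finset.induction_on with
  | empty => exact ⟨∅, subset_rfl, by simpa using hb, Or.inr rfl⟩
  | @insert j s hj ih =>
    obtain ⟨A, hAs, hAb, hA | rfl⟩ := ih fun i hi => hf i (mem_insert_of_mem hi)
    · exact ⟨A, hAs.trans (subset_insert _ _), hAb, Or.inl hA⟩
    by_cases hA : a ≤ ∑ i ∈ A, f i
    · exact ⟨A, subset_insert _ _, hAb, Or.inl hA⟩
    by_cases hj' : a ≤ f j
    · exact ⟨{j}, by simp, by simpa using hf j (mem_insert_self j A), Or.inl (by simpa using hj')⟩
    refine ⟨insert j A, subset_rfl, ?_, Or.inr rfl⟩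
    rw [sum_insert hj]
    exact (add_lt_add (not_le.mp hj') (not_le.mp hA)).le.trans hab

theorem exists_subset_sum_mem_Icc (f : ι → α) {a b : α} (hab : a + a ≤ b) (hb : 0 ≤ b)
    {s : Finset ι} (hf : ∀ i ∈ s, f i ≤ b) (hs : a ≤ ∑ i ∈ s, f i) :
    ∃ A ⊆ s, a ≤ ∑ i ∈ A, f i ∧ ∑ i ∈ A, f i ≤ b := by
  obtain ⟨A, hAs, hAb, hA | rfl⟩ := exists_subset_sum_le_and_le_sum_or_eq f hab hb hf
  exacts [⟨A, hAs, hA, hAb⟩, ⟨A, hAs, hs, hAb⟩]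

end Finset

namespace SimpleGraph

variable {V : Type*} [Fintype V] {T : SimpleGraph V} {c n u v x : V}

/-- For an edge `cn` of a tree `T`, the vertex set of the component of `T - c` containing `n`. -/
noncomputable def branch (T : SimpleGraph V) (c n : V) : Finset V :=
  {x | T.dist c x = T.dist n x + 1}

@[simp]
theorem mem_branch : x ∈ T.branch c n ↔ T.dist c x = T.dist n x + 1 := by
  simp [branch]

theorem self_notMem_branch : c ∉ T.branch c n := by
  simp

theorem mem_branch_of_adj (h : T.Adj c n) : n ∈ T.branch c n := by
  simp [h]

theorem IsTree.dist_eq_add_one_of_notMem_branch (hT : T.IsTree) (h : T.Adj c n)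
    (hx : x ∉ T.branch c n) : T.dist n x = T.dist c x + 1 := by
  have := hT.dist_eq_dist_add_one_of_adj x h
  rw [dist_comm, dist_comm (u := x)] at this
  rw [mem_branch] at hx
  omega

theorem Connected.exists_mem_branch (hT : T.Connected) (hx : x ≠ c) :
    ∃ n, T.Adj c n ∧ x ∈ T.branch c n := by
  obtain ⟨p, hp⟩ := hT.exists_walk_length_eq_dist c x
  have hnil : ¬p.Nil := Walk.not_nil_of_ne hx.symm
  refine ⟨p.snd, p.adj_snd hnil, mem_branch.mpr ?_⟩
  have h₁ := dist_le p.tail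
  have h₂ := p.length_tail_add_one hnil
  have h₃ := hT.dist_triangle (u := c) (v := p.snd) (w := x)
  rw [dist_eq_one_iff_adj.mpr (p.adj_snd hnil)] at h₃
  omega

theorem IsTree.snd_eq_of_mem_branch (hT : T.IsTree) (h : T.Adj c n) (hx : x ∈ T.branch c n)
    {p : T.Walk c x} (hp : p.IsPath) : p.snd = n := by
  obtain ⟨q, hq⟩ := hT.connected.exists_walk_length_eq_dist n x
  have hgeo : (q.cons h).IsPath :=
    (q.cons h).isPath_of_length_eq_dist (by simp [hq, mem_branch.mp hx])
  obtain rfl : p = q.cons h :=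
    congrArg Subtype.val ((hT.isAcyclic.subsingleton_path c x).elim ⟨p, hp⟩ ⟨_, hgeo⟩)
  simp

theorem IsTree.pairwiseDisjoint_branch (hT : T.IsTree) (c : V) :
    (T.neighborSet c).PairwiseDisjoint (T.branch c) := by
  intro n hn n' hn' hne
  refine Finset.disjoint_left.mpr fun x hx hx' => hne ?_
  obtain ⟨p, hp, -⟩ := hT.connected.exists_path_of_dist c x
  rw [← hT.snd_eq_of_mem_branch hn hx hp, hT.snd_eq_of_mem_branch hn' hx' hp]

theorem IsTree.mem_branch_of_adj_of_dist_eq (hT : T.IsTree) (h : T.Adj c n)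
    (hu : u ∈ T.branch c n) (huv : T.Adj u v) (hv : T.dist c v = T.dist c u + 1) :
    v ∈ T.branch c n := by
  by_contra hv'
  have h₁ := hT.dist_eq_add_one_of_notMem_branch h hv'
  have h₂ := hT.connected.dist_triangle (u := n) (v := u) (w := v)
  rw [dist_eq_one_iff_adj.mpr huv] at h₂
  rw [mem_branch] at hu
  omega

section DecidableEq

variable [DecidableEq V]

theorem Connected.exists_walk_support_subset_insert_branch (hT : T.Connected) (h : T.Adj c n)
    (hx : x ∈ T.branch c n) : ∃ p : T.Walk c x, ∀ y ∈ p.support, y ∈ insert c (T.branch c n) := by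
  obtain ⟨q, hq⟩ := hT.exists_walk_length_eq_dist n x
  refine ⟨q.cons h, fun y hy => ?_⟩
  rw [Walk.support_cons, List.mem_cons] at hy
  rcases hy with rfl | hy
  · exact mem_insert_self _ _
  -- initial segments of the geodesics `q` and `q.cons h` are geodesics
  have hgeo : (q.cons h).length = T.dist c x := by simp [hq, mem_branch.mp hx]
  have h₁ := length_eq_dist_of_subwalk hq (q.isSubwalk_takeUntil hy)
  have h₂ := length_eq_dist_of_subwalk hgeo
    (Walk.isSubwalk_of_append_left (by rw [Walk.cons_append, q.take_spec hy]) :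
      ((q.takeUntil y hy).cons h).IsSubwalk (q.cons h))
  rw [Walk.length_cons, h₁] at h₂
  exact mem_insert_of_mem (mem_branch.mpr h₂.symm)

theorem IsTree.exists_adj_mem_insert_branch (hT : T.IsTree) (c : V) (huv : T.Adj u v) :
    ∃ n, T.Adj c n ∧ u ∈ insert c (T.branch c n) ∧ v ∈ insert c (T.branch c n) := by
  wlog hd : T.dist c v = T.dist c u + 1 generalizing u v
  · obtain ⟨n, hn, hv, hu⟩ :=
      this huv.symm ((hT.dist_eq_dist_add_one_of_adj c huv).resolve_right hd)
    exact ⟨n, hn, hu, hv⟩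
  by_cases hu : u = c
  · subst hu
    exact ⟨v, huv, mem_insert_self _ _, mem_insert_of_mem (mem_branch_of_adj huv)⟩
  obtain ⟨n, hn, hun⟩ := hT.connected.exists_mem_branch hu
  exact ⟨n, hn, mem_insert_of_mem hun,
    mem_insert_of_mem (hT.mem_branch_of_adj_of_dist_eq hn hun huv hd)⟩

noncomputable def branchUnion (T : SimpleGraph V) (c : V) (N : Finset V) : Finset V :=
  insert c (N.biUnion (T.branch c))

variable {N A B : Finset V}

theorem mem_branchUnion : x ∈ T.branchUnion c N ↔ x = c ∨ ∃ n ∈ N, x ∈ T.branch c n := by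
  simp [branchUnion]

theorem insert_branch_subset_branchUnion (hn : n ∈ N) :
    insert c (T.branch c n) ⊆ T.branchUnion c N :=
  insert_subset_insert _ (subset_biUnion_of_mem _ hn)

theorem branchUnion_union : T.branchUnion c (A ∪ B) = T.branchUnion c A ∪ T.branchUnion c B := by
  simp only [branchUnion, union_biUnion, insert_union_distrib]

theorem Connected.branchUnion_neighborFinset [DecidableRel T.Adj] (hT : T.Connected) (c : V) :
    T.branchUnion c (T.neighborFinset c) = univ := by
  refine eq_univ_of_forall fun x => mem_branchUnion.mpr ?_
  by_cases hx : x = c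
  · exact Or.inl hx
  obtain ⟨n, hn, hxn⟩ := hT.exists_mem_branch hx
  exact Or.inr ⟨n, by simpa using hn, hxn⟩

theorem IsTree.branchUnion_inter_branchUnion (hT : T.IsTree) (hA : ∀ n ∈ A, T.Adj c n)
    (hB : ∀ n ∈ B, T.Adj c n) (hAB : Disjoint A B) :
    T.branchUnion c A ∩ T.branchUnion c B = {c} := by
  ext x
  simp only [mem_inter, mem_branchUnion, mem_singleton]
  constructor
  · rintro ⟨hx | ⟨n, hn, hxn⟩, hx' | ⟨n', hn', hxn'⟩⟩ <;> try assumption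
    have hne : n ≠ n' := fun h => Finset.disjoint_left.mp hAB hn (h ▸ hn')
    exact Finset.disjoint_left.mp (hT.pairwiseDisjoint_branch c (hA n hn) (hB n' hn') hne) hxn
      hxn' |>.elim
  · rintro rfl
    exact ⟨Or.inl rfl, Or.inl rfl⟩

theorem Connected.induce_branchUnion (hT : T.Connected) (hN : ∀ n ∈ N, T.Adj c n) :
    (T.induce (T.branchUnion c N : Set V)).Connected := by
  refine induce_connected_of_patches c (by simp [branchUnion]) fun {x} hx => ?_
  obtain rfl | ⟨n, hn, hxn⟩ := mem_branchUnion.mp hx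
  · exact ⟨{x}, by simpa using hx, rfl, rfl, Reachable.refl _⟩
  obtain ⟨p, hp⟩ := hT.exists_walk_support_subset_insert_branch (hN n hn) hxn
  exact ⟨{y | y ∈ p.support}, fun y hy => insert_branch_subset_branchUnion hn (hp y hy),
    p.start_mem_support, p.end_mem_support, p.connected_induce_support.preconnected _ _⟩

theorem IsTree.card_branchUnion_inter (hT : T.IsTree) (hN : ∀ n ∈ N, T.Adj c n) (Q : Finset V) :
    #(T.branchUnion c N ∩ Q) = #({c} ∩ Q) + ∑ n ∈ N, #(T.branch c n ∩ Q) := by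
  have hdisj : Disjoint ({c} ∩ Q) (N.biUnion (T.branch c) ∩ Q) :=
    Finset.disjoint_left.mpr fun x hx hx' => by
      simp only [mem_inter, mem_singleton, mem_biUnion] at hx hx'
      obtain ⟨n, -, hxn⟩ := hx'.1
      exact self_notMem_branch (hx.1 ▸ hxn)
  rw [branchUnion, insert_eq, union_inter_distrib_right, card_union_of_disjoint hdisj,
    biUnion_inter, card_biUnion]
  exact ((hT.pairwiseDisjoint_branch c).subset fun n hn => hN n hn).mono fun _ => inter_subset_left

structure IsDivision (T : SimpleGraph V) (S₁ S₂ : Finset V) : Prop where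
  connected_left : (T.induce (S₁ : Set V)).Connected
  connected_right : (T.induce (S₂ : Set V)).Connected
  union_eq_univ : S₁ ∪ S₂ = univ
  card_inter : #(S₁ ∩ S₂) = 1
  adj : ∀ u v, T.Adj u v → (u ∈ S₁ ∧ v ∈ S₁) ∨ (u ∈ S₂ ∧ v ∈ S₂)

theorem IsTree.isDivision_branchUnion [DecidableRel T.Adj] (hT : T.IsTree)
    (hA : A ⊆ T.neighborFinset c) :
    T.IsDivision (T.branchUnion c A) (T.branchUnion c (T.neighborFinset c \ A)) := by
  have hadj : ∀ N ⊆ T.neighborFinset c, ∀ n ∈ N, T.Adj c n := fun N hN n hn => by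
    simpa using hN hn
  refine ⟨hT.connected.induce_branchUnion (hadj A hA),
    hT.connected.induce_branchUnion (hadj _ sdiff_subset), ?_, ?_, fun u v huv => ?_⟩
  · rw [← branchUnion_union, union_sdiff_of_subset hA, hT.connected.branchUnion_neighborFinset]
  · rw [hT.branchUnion_inter_branchUnion (hadj A hA) (hadj _ sdiff_subset) disjoint_sdiff,
      card_singleton]
  obtain ⟨n, hn, hun, hvn⟩ := hT.exists_adj_mem_insert_branch c huv
  by_cases hnA : n ∈ A
  · exact Or.inl ⟨insert_branch_subset_branchUnion hnA hun,
      insert_branch_subset_branchUnion hnA hvn⟩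
  have hn' : n ∈ T.neighborFinset c \ A := mem_sdiff.mpr ⟨by simpa using hn, hnA⟩
  exact Or.inr ⟨insert_branch_subset_branchUnion hn' hun, insert_branch_subset_branchUnion hn' hvn⟩

theorem IsTree.sum_dist_add_card_branch_inter (hT : T.IsTree) (h : T.Adj c n) (Q : Finset V) :
    ∑ q ∈ Q, T.dist n q + #(T.branch c n ∩ Q) = ∑ q ∈ Q, T.dist c q + #(Q \ T.branch c n) := by
  have hstep : ∀ q ∈ Q, T.dist n q + (if q ∈ T.branch c n then 1 else 0) =
      T.dist c q + (if q ∉ T.branch c n then 1 else 0) := fun q _ => by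
    by_cases hq : q ∈ T.branch c n
    · simpa [hq] using (mem_branch.mp hq).symm
    · simpa [hq] using hT.dist_eq_add_one_of_notMem_branch h hq
  have := sum_congr rfl hstep
  simp only [sum_add_distrib, sum_boole, Nat.cast_id] at this
  rwa [filter_mem_eq_inter, filter_notMem_eq_sdiff, inter_comm] at this

theorem IsTree.exists_forall_two_mul_card_branch_inter_le (hT : T.IsTree) (Q : Finset V) :
    ∃ c, ∀ n, T.Adj c n → 2 * #(T.branch c n ∩ Q) ≤ #Q := by
  obtain ⟨c, -, hc⟩ := exists_min_image univ (fun v => ∑ q ∈ Q, T.dist v q)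
    (univ_nonempty_iff.mpr hT.connected.nonempty)
  refine ⟨c, fun n h => ?_⟩
  have := hT.sum_dist_add_card_branch_inter h Q
  have := hc n (mem_univ n)
  have := card_sdiff_add_card_inter Q (T.branch c n)
  rw [inter_comm] at this
  omega

theorem IsTree.exists_balanced_branchUnion [DecidableRel T.Adj] (hT : T.IsTree) (Q : Finset V) :
    ∃ c, ∃ A ⊆ T.neighborFinset c,
      (#Q : ℝ) / 3 ≤ #(T.branchUnion c A ∩ Q) ∧
      (#Q : ℝ) / 3 ≤ #(T.branchUnion c (T.neighborFinset c \ A) ∩ Q) := by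
  obtain ⟨c, hc⟩ := hT.exists_forall_two_mul_card_branch_inter_le Q
  set s := T.neighborFinset c
  have hadj : ∀ n ∈ s, T.Adj c n := fun n hn => by simpa [s] using hn
  set f : V → ℝ := fun n => #(T.branch c n ∩ Q)
  have hweight : ∀ N ⊆ s, (#(T.branchUnion c N ∩ Q) : ℝ) = #({c} ∩ Q) + ∑ n ∈ N, f n :=
    fun N hN => by
      rw [hT.card_branchUnion_inter (fun n hn => hadj n (hN hn)) Q]
      push_cast
      rfl
  have htotal : (#Q : ℝ) = #({c} ∩ Q) + ∑ n ∈ s, f n := by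
    rw [← hweight s subset_rfl, hT.connected.branchUnion_neighborFinset, univ_inter]
  have hc₀ : (0 : ℝ) ≤ #({c} ∩ Q) := by positivity
  have hf : ∀ n ∈ s, f n ≤ 2 * #Q / 3 := fun n hn => by
    have : (2 * #(T.branch c n ∩ Q) : ℝ) ≤ #Q := by exact_mod_cast hc n (hadj n hn)
    simp only [f]
    linarith
  obtain ⟨A, hAs, hA₁, hA₂⟩ := exists_subset_sum_mem_Icc f (a := #Q / 3 - #({c} ∩ Q))
    (b := 2 * #Q / 3) (by linarith) (by positivity) hf (by linarith)
  refine ⟨c, A, hAs, ?_, ?_⟩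
  · rw [hweight A hAs]
    linarith
  · rw [hweight _ sdiff_subset, sum_sdiff_eq_sub hAs]
    linarith

end DecidableEq

end SimpleGraph

/-- **Dividing a tree.** For any tree `T` and any set `Q` of vertices, there are two
subtrees `S₁, S₂` (given by their vertex sets, inducing connected subgraphs) which
divide `T`: they share exactly one vertex, every vertex of `T` lies in `S₁ ∪ S₂`,
every edge of `T` lies inside `S₁` or inside `S₂`, and each subtree captures at least
a third of `Q`. -/
theorem tree_divide {V : Type*} [Fintype V] [DecidableEq V] (T : SimpleGraph V) (hT : T.IsTree)
    (Q : Finset V) :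
    ∃ S₁ S₂ : Finset V,
      (T.induce (↑S₁ : Set V)).Connected ∧ (T.induce (↑S₂ : Set V)).Connected ∧
      S₁ ∪ S₂ = Finset.univ ∧ (S₁ ∩ S₂).card = 1 ∧
      (∀ u v : V, T.Adj u v → (u ∈ S₁ ∧ v ∈ S₁) ∨ (u ∈ S₂ ∧ v ∈ S₂)) ∧
      (Q.card : ℝ) / 3 ≤ ((S₁ ∩ Q).card : ℝ) ∧
      (Q.card : ℝ) / 3 ≤ ((S₂ ∩ Q).card : ℝ) := by
  classical
  obtain ⟨c, A, hA, h₁, h₂⟩ := hT.exists_balanced_branchUnion Q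
  have hdiv := hT.isDivision_branchUnion hA
  exact ⟨_, _, hdiv.connected_left, hdiv.connected_right, hdiv.union_eq_univ, hdiv.card_inter,
    hdiv.adj, h₁, h₂⟩
end

section
/- Let G be a graph, let P be a path a-b-c-d of length 3 whose internal vertices b, c have degree 2 in a tree T containing P. Let T̃ be the tree obtained from T by deleting the edge c-d and adding the edge b-d (so that c and d become leaves adjacent to b). If a graph G contains a copy of T̃, then G² contains a copy of T. More generally, if T̃ is obtained from a tree T by replacing vertex-disjoint bare paths P_i = a_i b_i c_i d_i with 'spiders' having edges a_i b_i, b_i c_i, b_i d_i, then any embedding of T̃ into G yields an embedding of T into G². -/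
open Finset SimpleGraph

-- The square of a graph: two vertices are adjacent iff they are at distance 1 or 2.
def square {V : Type*} (G : SimpleGraph V) : SimpleGraph V :=
  SimpleGraph.fromRel fun u v => G.Adj u v ∨ ∃ w, G.Adj u w ∧ G.Adj w v

/-- If `T̃` is obtained from a tree `T` by replacing pairwise vertex-disjoint bare
paths `Pᵢ = aᵢbᵢcᵢdᵢ` of length 3 with "spiders" having edges `aᵢbᵢ, bᵢcᵢ, bᵢdᵢ`
(i.e. deleting the edges `cᵢdᵢ` and adding the edges `bᵢdᵢ`), then any copy of `T̃`
in a graph `G` yields a copy of `T` in `G²`. -/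
theorem square_contains_tree_of_spider_copy {V W : Type*} [Fintype V]
    (T : SimpleGraph V) (hT : T.IsTree) (G : SimpleGraph W)
    (m : ℕ) (a b c d : Fin m → V)
    (hab : ∀ i, T.Adj (a i) (b i)) (hbc : ∀ i, T.Adj (b i) (c i))
    (hcd : ∀ i, T.Adj (c i) (d i))
    (hnodup : ∀ i, ([a i, b i, c i, d i] : List V).Nodup)
    (hbare : ∀ i, ∀ x ∈ ({a i, b i, c i, d i} : Set V), (T.neighborSet x).ncard = 2)
    (hdisj : ∀ i₁ i₂, i₁ ≠ i₂ →
      Disjoint ({a i₁, b i₁, c i₁, d i₁} : Set V) ({a i₂, b i₂, c i₂, d i₂} : Set V))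
    (Ttil : SimpleGraph V)
    (hTtil : Ttil = SimpleGraph.fromEdgeSet
      ((T.edgeSet \ ⋃ i, {s(c i, d i)}) ∪ ⋃ i, {s(b i, d i)}))
    (hcopy : ∃ f : V → W, Function.Injective f ∧
      ∀ u v, Ttil.Adj u v → G.Adj (f u) (f v)) :
    ∃ f : V → W, Function.Injective f ∧
      ∀ u v, T.Adj u v → (square G).Adj (f u) (f v) := by

  obtain ⟨f, hfinj, hf⟩ := hcopy
  -- b i is distinct from c j and d j for all i, j
  have key : ∀ i j : Fin m, b i ≠ c j ∧ b i ≠ d j := by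
    intro i j
    by_cases h : i = j
    · subst h
      have := hnodup i
      simp only [List.nodup_cons, List.mem_cons, List.mem_singleton,
        List.not_mem_nil, or_false, List.nodup_nil] at this
      tauto
    · have hd := hdisj i j h
      have hb : b i ∈ ({a i, b i, c i, d i} : Set V) := by simp
      constructor
      · intro he
        exact Set.disjoint_left.mp hd hb (by rw [he]; simp)
      · intro he
        exact Set.disjoint_left.mp hd hb (by rw [he]; simp)
  have hbd : ∀ i, Ttil.Adj (b i) (d i) := by
    intro i
    rw [hTtil, SimpleGraph.fromEdgeSet_adj]
    exact ⟨Or.inr (Set.mem_iUnion.mpr ⟨i, rfl⟩), (key i i).2⟩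
  have hbc' : ∀ i, Ttil.Adj (b i) (c i) := by
    intro i
    rw [hTtil, SimpleGraph.fromEdgeSet_adj]
    refine ⟨Or.inl ⟨(T.mem_edgeSet.mpr (hbc i)), ?_⟩, (hbc i).ne⟩
    simp only [Set.mem_iUnion, Set.mem_singleton_iff, not_exists]
    intro j hj
    rw [Sym2.eq_iff] at hj
    rcases hj with ⟨h1, _⟩ | ⟨h1, _⟩
    · exact (key i j).1 h1
    · exact (key i j).2 h1
  refine ⟨f, hfinj, fun u v huv => ?_⟩
  have hne : f u ≠ f v := fun h => T.ne_of_adj huv (hfinj h)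
  by_cases hcase : ∃ i, s(u, v) = s(c i, d i)
  · obtain ⟨i, hi⟩ := hcase
    rw [Sym2.eq_iff] at hi
    refine ⟨hne, Or.inl (Or.inr ⟨f (b i), ?_, ?_⟩)⟩
    · rcases hi with ⟨h1, _⟩ | ⟨h1, _⟩
      · rw [h1]; exact hf _ _ (hbc' i).symm
      · rw [h1]; exact hf _ _ (hbd i).symm
    · rcases hi with ⟨_, h2⟩ | ⟨_, h2⟩
      · rw [h2]; exact hf _ _ (hbd i)
      · rw [h2]; exact hf _ _ (hbc' i)
  · push_neg at hcase
    have : Ttil.Adj u v := by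
      rw [hTtil, SimpleGraph.fromEdgeSet_adj]
      refine ⟨Or.inl ⟨(T.mem_edgeSet.mpr huv), ?_⟩, T.ne_of_adj huv⟩
      simp only [Set.mem_iUnion, Set.mem_singleton_iff, not_exists]
      exact hcase
    exact ⟨hne, Or.inl (Or.inl (hf u v this))⟩
end

section
/- Let G be an m-joined bipartite-compatible graph and A, B ⊆ V(G) disjoint with |A| = |B|. Suppose (i) every U ⊆ A with 1 ≤ |U| ≤ m satisfies |N_G(U) ∩ B| ≥ |U|, and (ii) every W ⊆ B with 1 ≤ |W| ≤ m satisfies |N_G(W) ∩ A| ≥ |W|. Then the bipartite graph G[A,B] contains a perfect matching. -/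
open Finset SimpleGraph

-- A graph is `m`-joined if every two disjoint vertex sets of size `m` each are
-- joined by at least one edge.
def MJoinedNat {V : Type*} (G : SimpleGraph V) (m : ℕ) : Prop :=
  ∀ A B : Finset V, Disjoint A B → m ≤ A.card → m ≤ B.card →
    ∃ a ∈ A, ∃ b ∈ B, G.Adj a b

-- If `G` is `m`-joined, `A, B` are disjoint with `|A| = |B|`, and
-- (i) every `U ⊆ A` with `1 ≤ |U| ≤ m` has at least `|U|` neighbours in `B`, and
-- (ii) every `W ⊆ B` with `1 ≤ |W| ≤ m` has at least `|W|` neighbours in `A`,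
-- then the bipartite graph `G[A,B]` contains a perfect matching.
open Classical in
theorem perfect_matching_from_joinedness {V : Type*} [Fintype V]
    (G : SimpleGraph V) (m : ℕ) (A B : Finset V) (hAB : Disjoint A B)
    (hcard : A.card = B.card) (hjoined : MJoinedNat G m)
    (hi : ∀ U ⊆ A, 1 ≤ U.card → U.card ≤ m →
      U.card ≤ (B.filter fun b => ∃ u ∈ U, G.Adj u b).card)
    (hii : ∀ W ⊆ B, 1 ≤ W.card → W.card ≤ m →
      W.card ≤ (A.filter fun a => ∃ w ∈ W, G.Adj w a).card) :
    ∃ f : V → V, Set.BijOn f ↑A ↑B ∧ ∀ a ∈ A, G.Adj a (f a) := by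
  classical
  -- Hall's condition for subsets of A
  have key : ∀ U ⊆ A, U.card ≤ (B.filter fun b => ∃ u ∈ U, G.Adj u b).card := by
    intro U hU
    rcases eq_or_ne U ∅ with rfl | h0
    · simp
    rcases le_or_gt U.card m with hle | hlt
    · exact hi U hU (Finset.card_pos.2 (Finset.nonempty_of_ne_empty h0)) hle
    · set N := B.filter (fun b => ∃ u ∈ U, G.Adj u b) with hN
      have hNB : N ⊆ B := Finset.filter_subset _ _
      set W := B \ N with hW
      have hWB : W ⊆ B := Finset.sdiff_subset
      have hUW : Disjoint U W := Finset.disjoint_of_subset_left hU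
        (Finset.disjoint_of_subset_right hWB hAB)
      have hWsmall : W.card < m ∨ W = ∅ := by
        by_cases hWe : W = ∅
        · exact Or.inr hWe
        left
        by_contra hc
        push_neg at hc
        obtain ⟨u, hu, w, hw, hadj⟩ := hjoined U W hUW hlt.le hc
        have hwN : w ∈ N := by
          rw [hN, Finset.mem_filter]
          exact ⟨hWB hw, u, hu, hadj⟩
        rw [hW, Finset.mem_sdiff] at hw
        exact hw.2 hwN
      have hNcard : N.card = B.card - W.card := by
        rw [hW, Finset.card_sdiff_of_subset hNB]
        have := Finset.card_le_card hNB
        omega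
      rcases hWsmall with hWlt | hWempty
      · rcases eq_or_ne W ∅ with hWe | hWne
        · have : N = B := by
            apply Finset.eq_of_subset_of_card_le hNB
            rw [hNcard, hWe]; simp
          rw [this]
          calc U.card ≤ A.card := Finset.card_le_card hU
            _ = B.card := hcard
        · have hW1 : 1 ≤ W.card := Finset.card_pos.2 (Finset.nonempty_of_ne_empty hWne)
          have hWm : W.card ≤ m := hWlt.le
          have hWnbr := hii W hWB hW1 hWm
          have hsub : A.filter (fun a => ∃ w ∈ W, G.Adj w a) ⊆ A \ U := by
            intro a ha
            rw [Finset.mem_filter] at ha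
            obtain ⟨haA, w, hw, hadj⟩ := ha
            rw [Finset.mem_sdiff]
            refine ⟨haA, fun haU => ?_⟩
            have : w ∈ N := by
              rw [hN, Finset.mem_filter]
              exact ⟨hWB hw, a, haU, hadj.symm⟩
            rw [hW, Finset.mem_sdiff] at hw
            exact hw.2 this
          have h1 : W.card ≤ (A \ U).card :=
            le_trans hWnbr (Finset.card_le_card hsub)
          have h2 : (A \ U).card = A.card - U.card := Finset.card_sdiff_of_subset hU
          have h3 : U.card ≤ A.card := Finset.card_le_card hU
          omega
      · have : N = B := by
          apply Finset.eq_of_subset_of_card_le hNB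
          rw [hNcard, hWempty]; simp
        rw [this]
        calc U.card ≤ A.card := Finset.card_le_card hU
          _ = B.card := hcard
  -- Hall's condition for the subtype version
  have hall : ∀ s : Finset ↥A,
      s.card ≤ (s.biUnion fun a => B.filter fun b => G.Adj ↑a b).card := by
    intro s
    have hU : (s.image Subtype.val) ⊆ A := by
      intro v hv
      simp only [Finset.mem_image] at hv
      obtain ⟨a, _, rfl⟩ := hv
      exact a.2
    have hcardU : (s.image Subtype.val).card = s.card :=
      Finset.card_image_of_injective _ Subtype.val_injective
    have heq : (s.biUnion fun a => B.filter fun b => G.Adj ↑a b) =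
        B.filter (fun b => ∃ u ∈ s.image Subtype.val, G.Adj u b) := by
      ext b
      simp only [Finset.mem_biUnion, Finset.mem_filter, Finset.mem_image]
      constructor
      · rintro ⟨a, ha, hb, hadj⟩
        exact ⟨hb, ↑a, ⟨a, ha, rfl⟩, hadj⟩
      · rintro ⟨hb, u, ⟨a, ha, rfl⟩, hadj⟩
        exact ⟨a, ha, hb, hadj⟩
    rw [heq, ← hcardU]
    exact key _ hU
  obtain ⟨f, hfinj, hf⟩ :=
    (Finset.all_card_le_biUnion_card_iff_exists_injective _).1 hall
  refine ⟨fun v => if h : v ∈ A then f ⟨v, h⟩ else v, ⟨?_, ?_, ?_⟩, ?_⟩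
  · intro a ha
    simp only [Finset.mem_coe] at ha
    simp only [dif_pos ha]
    have := hf ⟨a, ha⟩
    rw [Finset.mem_filter] at this
    exact this.1
  · intro a ha b hb hab
    simp only [Finset.mem_coe] at ha hb
    simp only [dif_pos ha, dif_pos hb] at hab
    exact Subtype.ext_iff.mp (hfinj hab)
  · intro b hb
    simp only [Finset.mem_coe] at hb
    have hIsub : A.attach.image (fun a => f a) ⊆ B := by
      intro x hx
      simp only [Finset.mem_image] at hx
      obtain ⟨a, _, rfl⟩ := hx
      have := hf a
      rw [Finset.mem_filter] at this
      exact this.1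
    have hIcard : (A.attach.image (fun a => f a)).card = B.card := by
      rw [Finset.card_image_of_injective _ hfinj, Finset.card_attach, hcard]
    have hIB : A.attach.image (fun a => f a) = B :=
      Finset.eq_of_subset_of_card_le hIsub (le_of_eq hIcard.symm)
    rw [← hIB, Finset.mem_image] at hb
    obtain ⟨a, _, rfl⟩ := hb
    refine ⟨↑a, a.2, ?_⟩
    simp only [dif_pos a.2]
  · intro a ha
    simp only [dif_pos ha]
    have := hf ⟨a, ha⟩
    rw [Finset.mem_filter] at this
    exact this.2
end

section
/- Let A₁, …, A_n be events in a probability space such that each A_i is mutually independent of all but at most d of the other events. If P(A_i) ≤ p for all i and e·p·(d+1) ≤ 1, then P(⋂ᵢ A_iᶜ) > 0. -/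
open MeasureTheory Finset

/-- **Symmetric Lovász Local Lemma.** Let `A₁, …, Aₙ` be events, each mutually
independent of all other events except at most `d` of them (here expressed via the
standard conditional form: for every set `S` of indices outside the dependency set
`Γ i` of `A i`, the event `A i` is independent of `⋂_{j ∈ S} (A j)ᶜ`). If
`P(A i) ≤ p` for all `i` and `e·p·(d+1) ≤ 1`, then `P(⋂ᵢ (A i)ᶜ) > 0`. -/
theorem lovasz_local_lemma {Ω : Type*} [MeasurableSpace Ω] (μ : Measure Ω)
    [IsProbabilityMeasure μ] (n d : ℕ) (A : Fin n → Set Ω)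
    (hmeas : ∀ i, MeasurableSet (A i)) (Γ : Fin n → Finset (Fin n))
    (hΓcard : ∀ i, (Γ i).card ≤ d)
    (hindep : ∀ i : Fin n, ∀ S : Finset (Fin n),
      (∀ j ∈ S, j ≠ i ∧ j ∉ Γ i) →
      μ (A i ∩ ⋂ j ∈ S, (A j)ᶜ) = μ (A i) * μ (⋂ j ∈ S, (A j)ᶜ))
    (p : ℝ) (hp : ∀ i, (μ (A i)).toReal ≤ p)
    (hcond : Real.exp 1 * p * (d + 1) ≤ 1) :
    0 < μ (⋂ i, (A i)ᶜ) := by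
  classical
  set x : ℝ := 1 / (d + 2) with hxdef
  have hd0 : (0:ℝ) < (d:ℝ) + 1 := by positivity
  have hd2 : (0:ℝ) < (d:ℝ) + 2 := by positivity
  have hx0 : 0 < x := by rw [hxdef]; positivity
  have hx1 : x < 1 := by
    rw [hxdef, div_lt_one hd2]; linarith
  have he : (0:ℝ) < Real.exp 1 := Real.exp_pos 1
  have h1x : 1 - x = ((d:ℝ) + 1) / ((d:ℝ) + 2) := by
    rw [hxdef]; field_simp; ring
  have hstep : (1 + 1 / ((d:ℝ) + 1)) ^ (d + 1) ≤ Real.exp 1 := by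
    have h1 : (1:ℝ) + 1 / ((d:ℝ) + 1) ≤ Real.exp (1 / ((d:ℝ) + 1)) := by
      have := Real.add_one_le_exp (1 / ((d:ℝ) + 1)); linarith
    calc (1 + 1 / ((d:ℝ) + 1)) ^ (d + 1)
        ≤ (Real.exp (1 / ((d:ℝ) + 1))) ^ (d + 1) :=
          pow_le_pow_left₀ (by positivity) h1 _
      _ = Real.exp 1 := by
          rw [← Real.exp_nat_mul]
          congr 1
          push_cast
          field_simp
  have hpx : p ≤ x * (1 - x) ^ d := by
    have hp' : p ≤ 1 / (Real.exp 1 * ((d:ℝ) + 1)) := by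
      rw [le_div_iff₀ (by positivity)]
      calc p * (Real.exp 1 * ((d:ℝ) + 1)) = Real.exp 1 * p * ((d:ℝ) + 1) := by ring
        _ ≤ 1 := hcond
    have hxd : x * (1 - x) ^ d = ((d:ℝ) + 1) ^ d / ((d:ℝ) + 2) ^ (d + 1) := by
      rw [h1x, hxdef, div_pow, div_mul_div_comm, one_mul, ← pow_succ']
    have hkey : 1 / (Real.exp 1 * ((d:ℝ) + 1))
        ≤ ((d:ℝ) + 1) ^ d / ((d:ℝ) + 2) ^ (d + 1) := by
      rw [div_le_div_iff₀ (by positivity) (by positivity), one_mul]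
      have hEq : ((d:ℝ) + 2) ^ (d + 1)
          = (1 + 1 / ((d:ℝ) + 1)) ^ (d + 1) * ((d:ℝ) + 1) ^ (d + 1) := by
        rw [← mul_pow]; congr 1; field_simp; ring
      rw [hEq]
      calc (1 + 1 / ((d:ℝ) + 1)) ^ (d + 1) * ((d:ℝ) + 1) ^ (d + 1)
          ≤ Real.exp 1 * ((d:ℝ) + 1) ^ (d + 1) :=
            mul_le_mul_of_nonneg_right hstep (by positivity)
        _ = ((d:ℝ) + 1) ^ d * (Real.exp 1 * ((d:ℝ) + 1)) := by rw [pow_succ]; ring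
    calc p ≤ 1 / (Real.exp 1 * ((d:ℝ) + 1)) := hp'
      _ ≤ ((d:ℝ) + 1) ^ d / ((d:ℝ) + 2) ^ (d + 1) := hkey
      _ = x * (1 - x) ^ d := hxd.symm
  have hpowd1 : (1 - x) ^ d ≤ 1 := pow_le_one₀ (by linarith) (by linarith)
  have hpxx : p ≤ x := le_trans hpx (by
    calc x * (1 - x) ^ d ≤ x * 1 := mul_le_mul_of_nonneg_left hpowd1 hx0.le
      _ = x := mul_one x)
  -- measure-theoretic setup
  have hCmeas : ∀ S : Finset (Fin n), MeasurableSet (⋂ j ∈ S, (A j)ᶜ) := fun S =>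
    MeasurableSet.biInter S.countable_toSet (fun j _ => (hmeas j).compl)
  have hfin : ∀ s : Set Ω, μ s ≠ ⊤ := fun s => measure_ne_top μ s
  have hmono : ∀ {S T : Finset (Fin n)}, S ⊆ T →
      (⋂ j ∈ T, (A j)ᶜ) ⊆ ⋂ j ∈ S, (A j)ᶜ := by
    intro S T h ω hω
    simp only [Set.mem_iInter] at hω ⊢
    exact fun j hj => hω j (h hj)
  have hmonoR : ∀ {s t : Set Ω}, s ⊆ t → (μ s).toReal ≤ (μ t).toReal := fun h =>
    ENNReal.toReal_mono (hfin _) (measure_mono h)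
  have hins : ∀ (j : Fin n) (S : Finset (Fin n)),
      (μ (⋂ k ∈ insert j S, (A k)ᶜ)).toReal
        = (μ (⋂ k ∈ S, (A k)ᶜ)).toReal - (μ (A j ∩ ⋂ k ∈ S, (A k)ᶜ)).toReal := by
    intro j S
    have hset : (⋂ k ∈ insert j S, (A k)ᶜ)
        = (⋂ k ∈ S, (A k)ᶜ) \ (A j ∩ ⋂ k ∈ S, (A k)ᶜ) := by
      rw [Finset.set_biInter_insert]
      ext ω
      simp only [Set.mem_inter_iff, Set.mem_compl_iff, Set.mem_diff]
      tauto
    rw [hset, measure_diff Set.inter_subset_right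
        ((hmeas j).inter (hCmeas S)).nullMeasurableSet (hfin _),
      ENNReal.toReal_sub_of_le (measure_mono Set.inter_subset_right) (hfin _)]
  -- main claim
  have claim : ∀ N : ℕ, ∀ S : Finset (Fin n), S.card ≤ N → ∀ i, i ∉ S →
      (μ (A i ∩ ⋂ j ∈ S, (A j)ᶜ)).toReal ≤ x * (μ (⋂ j ∈ S, (A j)ᶜ)).toReal := by
    intro N
    induction N with
    | zero =>
      intro S hS i _
      have hSe : S = ∅ := Finset.card_eq_zero.mp (Nat.le_zero.mp hS)
      subst hSe
      have hU : (⋂ j ∈ (∅ : Finset (Fin n)), (A j)ᶜ) = Set.univ := by simp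
      rw [hU, Set.inter_univ, measure_univ, ENNReal.toReal_one, mul_one]
      exact le_trans (hp i) hpxx
    | succ N IH =>
      intro S hS i hi
      by_cases h1 : S ∩ Γ i = ∅
      · have hall : ∀ j ∈ S, j ≠ i ∧ j ∉ Γ i := by
          intro j hj
          refine ⟨?_, ?_⟩
          · rintro rfl; exact hi hj
          · intro hg
            exact Finset.eq_empty_iff_forall_notMem.mp h1 j (Finset.mem_inter.mpr ⟨hj, hg⟩)
        rw [hindep i S hall, ENNReal.toReal_mul]
        exact mul_le_mul_of_nonneg_right (le_trans (hp i) hpxx) ENNReal.toReal_nonneg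
      · have hS₂sub : S \ Γ i ⊆ S := Finset.sdiff_subset
        have hAB : (μ (A i ∩ ⋂ j ∈ S, (A j)ᶜ)).toReal
            ≤ p * (μ (⋂ j ∈ S \ Γ i, (A j)ᶜ)).toReal := by
          have hm1 : (μ (A i ∩ ⋂ j ∈ S, (A j)ᶜ)).toReal
              ≤ (μ (A i ∩ ⋂ j ∈ S \ Γ i, (A j)ᶜ)).toReal :=
            hmonoR (Set.inter_subset_inter_right _ (hmono hS₂sub))
          have hcondS₂ : ∀ j ∈ S \ Γ i, j ≠ i ∧ j ∉ Γ i := by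
            intro j hj
            rw [Finset.mem_sdiff] at hj
            exact ⟨by rintro rfl; exact hi hj.1, hj.2⟩
          rw [hindep i (S \ Γ i) hcondS₂, ENNReal.toReal_mul] at hm1
          exact le_trans hm1 (mul_le_mul_of_nonneg_right (hp i) ENNReal.toReal_nonneg)
        have inner : ∀ T : Finset (Fin n), T ⊆ S ∩ Γ i →
            (1 - x) ^ T.card * (μ (⋂ j ∈ S \ Γ i, (A j)ᶜ)).toReal
              ≤ (μ (⋂ j ∈ (S \ Γ i) ∪ T, (A j)ᶜ)).toReal := by
          intro T
          induction T using Finset.induction_on with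
          | empty => intro _; simp
          | @insert j T hjT ihT =>
            intro hsub
            have hjS₁ : j ∈ S ∩ Γ i := hsub (Finset.mem_insert_self j T)
            have hjS : j ∈ S := (Finset.mem_inter.mp hjS₁).1
            have hjΓ : j ∈ Γ i := (Finset.mem_inter.mp hjS₁).2
            have hTsub : T ⊆ S ∩ Γ i := fun y hy => hsub (Finset.mem_insert_of_mem hy)
            have hjnot : j ∉ (S \ Γ i) ∪ T := by
              rw [Finset.mem_union]
              rintro (h | h)
              · exact (Finset.mem_sdiff.mp h).2 hjΓ
              · exact hjT h
            have hsubS : (S \ Γ i) ∪ T ⊆ S := by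
              intro y hy
              rcases Finset.mem_union.mp hy with h | h
              · exact hS₂sub h
              · exact (Finset.mem_inter.mp (hTsub h)).1
            have hcard : ((S \ Γ i) ∪ T).card ≤ N := by
              have hss : (S \ Γ i) ∪ T ⊂ S :=
                (Finset.ssubset_iff_of_subset hsubS).mpr ⟨j, hjS, hjnot⟩
              have := Finset.card_lt_card hss
              omega
            have hIH := IH ((S \ Γ i) ∪ T) hcard j hjnot
            have hrec := ihT hTsub
            have hunion : (S \ Γ i) ∪ insert j T = insert j ((S \ Γ i) ∪ T) := by
              rw [Finset.union_insert]
            rw [hunion, hins j ((S \ Γ i) ∪ T), Finset.card_insert_of_notMem hjT, pow_succ]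
            have h1xnn : (0:ℝ) ≤ 1 - x := by linarith
            have hmul := mul_le_mul_of_nonneg_left hrec h1xnn
            nlinarith [hmul, hIH]
        have hB := inner (S ∩ Γ i) (Finset.Subset.refl _)
        rw [Finset.sdiff_union_inter] at hB
        have hcardd : (S ∩ Γ i).card ≤ d :=
          le_trans (Finset.card_le_card Finset.inter_subset_right) (hΓcard i)
        have hpow : (1 - x) ^ d ≤ (1 - x) ^ ((S ∩ Γ i).card) :=
          pow_le_pow_of_le_one (by linarith) (by linarith) hcardd
        calc (μ (A i ∩ ⋂ j ∈ S, (A j)ᶜ)).toReal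
            ≤ p * (μ (⋂ j ∈ S \ Γ i, (A j)ᶜ)).toReal := hAB
          _ ≤ (x * (1 - x) ^ d) * (μ (⋂ j ∈ S \ Γ i, (A j)ᶜ)).toReal :=
              mul_le_mul_of_nonneg_right hpx ENNReal.toReal_nonneg
          _ = x * ((1 - x) ^ d * (μ (⋂ j ∈ S \ Γ i, (A j)ᶜ)).toReal) := by ring
          _ ≤ x * ((1 - x) ^ ((S ∩ Γ i).card) * (μ (⋂ j ∈ S \ Γ i, (A j)ᶜ)).toReal) :=
              mul_le_mul_of_nonneg_left
                (mul_le_mul_of_nonneg_right hpow ENNReal.toReal_nonneg) hx0.le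
          _ ≤ x * (μ (⋂ j ∈ S, (A j)ᶜ)).toReal := mul_le_mul_of_nonneg_left hB hx0.le
  -- positivity
  have pos : ∀ S : Finset (Fin n), 0 < (μ (⋂ j ∈ S, (A j)ᶜ)).toReal := by
    intro S
    induction S using Finset.induction_on with
    | empty => simp
    | @insert j S hj ih =>
      have h := claim S.card S le_rfl j hj
      rw [hins j S]
      have hlt : x * (μ (⋂ k ∈ S, (A k)ᶜ)).toReal < 1 * (μ (⋂ k ∈ S, (A k)ᶜ)).toReal :=
        mul_lt_mul_of_pos_right hx1 ih
      linarith
  have hfinal : (⋂ i, (A i)ᶜ) = ⋂ j ∈ (Finset.univ : Finset (Fin n)), (A j)ᶜ := by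
    ext ω; simp
  rw [hfinal]
  have hp0 := pos Finset.univ
  rcases eq_or_ne (μ (⋂ j ∈ (Finset.univ : Finset (Fin n)), (A j)ᶜ)) 0 with h | h
  · rw [h] at hp0; simp at hp0
  · exact pos_iff_ne_zero.mpr h
end
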